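/- arXiv:2509.15281 — 2 statements merged into one kernel-verified Lean document; each statement's English description precedes it below -/
import Mathlib

section
/- Let V be a finite-dimensional real inner product space of dimension r ≥ 2, W a real inner product space, and B : V × V → W a symmetric bilinear map. Fix an orthonormal basis {e_1, …, e_r} of V and set trace B = Σ_{i=1}^r B(e_i,e_i). Then Σ_{i=2}^r ( ⟨B(e_1,e_1), B(e_i,e_i)⟩ − ‖B(e_1,e_i)‖² ) ≤ (1/4)‖trace B‖², with equality if and only if B(e_1,e_1) = Σ_{i=2}^r B(e_i,e_i) and B(e_1,e_i) = 0 for all i = 2, …, r. -/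
open Finset RealInnerProductSpace

theorem stmt_5 (V W : Type*) [NormedAddCommGroup V] [InnerProductSpace ℝ V]
    [FiniteDimensional ℝ V] [NormedAddCommGroup W] [InnerProductSpace ℝ W]
    (B : V →ₗ[ℝ] V →ₗ[ℝ] W) (hB : ∀ x y, B x y = B y x)
    (r : ℕ) [NeZero r] (hr : 2 ≤ r) (e : OrthonormalBasis (Fin r) ℝ V) :
    ∑ i ∈ univ.filter (fun i => i ≠ (0 : Fin r)),
        (⟪B (e 0) (e 0), B (e i) (e i)⟫ - ‖B (e 0) (e i)‖ ^ 2)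
      ≤ (1 / 4) * ‖∑ i, B (e i) (e i)‖ ^ 2 ∧
    (∑ i ∈ univ.filter (fun i => i ≠ (0 : Fin r)),
        (⟪B (e 0) (e 0), B (e i) (e i)⟫ - ‖B (e 0) (e i)‖ ^ 2)
      = (1 / 4) * ‖∑ i, B (e i) (e i)‖ ^ 2 ↔
      (B (e 0) (e 0) = ∑ i ∈ univ.filter (fun i => i ≠ (0 : Fin r)), B (e i) (e i)) ∧
        ∀ i, i ≠ (0 : Fin r) → B (e 0) (e i) = 0) := by
  set a := B (e 0) (e 0) with ha
  set s : Finset (Fin r) := univ.filter (fun i => i ≠ (0 : Fin r)) with hs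
  set S := ∑ i ∈ s, B (e i) (e i) with hS
  set Q := ∑ i ∈ s, ‖B (e 0) (e i)‖ ^ 2 with hQdef
  have hsum : ∑ i, B (e i) (e i) = a + S := by
    rw [hS, hs, Finset.filter_ne', ← Finset.add_sum_erase _ _ (mem_univ (0 : Fin r))]
  have hL : ∑ i ∈ s, (⟪a, B (e i) (e i)⟫ - ‖B (e 0) (e i)‖ ^ 2) = ⟪a, S⟫ - Q := by
    rw [Finset.sum_sub_distrib, hQdef, hS, inner_sum]
  have key : (1/4) * ‖a + S‖ ^ 2 - (⟪a, S⟫ - Q) = (1/4) * ‖a - S‖ ^ 2 + Q := by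
    rw [norm_add_sq_real, norm_sub_sq_real]; ring
  have hQ0 : 0 ≤ Q := Finset.sum_nonneg fun i _ => by positivity
  refine ⟨?_, ?_⟩
  · rw [hsum, hL]
    nlinarith [sq_nonneg ‖a - S‖, hQ0]
  · rw [hsum, hL]
    constructor
    · intro h
      have h2 : (1/4) * ‖a - S‖ ^ 2 + Q = 0 := by linarith
      have h3 : ‖a - S‖ ^ 2 = 0 := by nlinarith [sq_nonneg ‖a - S‖]
      have h4 : Q = 0 := by nlinarith [sq_nonneg ‖a - S‖]
      refine ⟨?_, ?_⟩
      · have h5 : a - S = 0 := by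
          rwa [pow_eq_zero_iff two_ne_zero, norm_eq_zero] at h3
        exact sub_eq_zero.mp h5
      · intro i hi
        have h6 := (Finset.sum_eq_zero_iff_of_nonneg
          (fun j _ => by positivity)).mp h4 i (by simp [hs, hi])
        exact norm_eq_zero.mp (pow_eq_zero_iff two_ne_zero |>.mp h6)
    · rintro ⟨h1, h2⟩
      have hQz : Q = 0 := Finset.sum_eq_zero fun i hi => by
        rw [h2 i (by simpa [hs] using hi)]; simp
      rw [show a = S from h1, hQz, real_inner_self_eq_norm_sq,
        show ‖S + S‖ ^ 2 = 4 * ‖S‖ ^ 2 by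
          rw [norm_add_sq_real, real_inner_self_eq_norm_sq]; ring]
      ring
end

section
/- Let (V, g, φ, ξ, η) be a linear almost contact metric structure and R the generalized-Sasakian-space-form curvature with constants c₁, c₂, c₃. Let {v_1, …, v_n} and {h_1, …, h_r} be mutually orthogonal orthonormal families in V, and suppose ξ lies in the span of {v_1, …, v_n}. Then Σ_{i=1}^r Σ_{j=1}^n g( R(v_j, h_i)h_i, v_j ) = n r c₁ + 3 c₂ Σ_{i=1}^r Σ_{j=1}^n g(φ v_j, h_i)² − c₃ r. -/
open Finset RealInnerProductSpace

theorem stmt_14 (V : Type*) [NormedAddCommGroup V] [InnerProductSpace ℝ V]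
    (φ : V →ₗ[ℝ] V) (ξ : V)
    (hξ : ⟪ξ, ξ⟫ = 1)
    (hφ2 : ∀ X, φ (φ X) = -X + ⟪ξ, X⟫ • ξ)
    (hg : ∀ X Y, ⟪φ X, φ Y⟫ = ⟪X, Y⟫ - ⟪ξ, X⟫ * ⟪ξ, Y⟫)
    (c₁ c₂ c₃ : ℝ) (R : V → V → V → V)
    (hR : ∀ X Y Z, R X Y Z =
      c₁ • (⟪Y, Z⟫ • X - ⟪X, Z⟫ • Y) +
      c₂ • (⟪X, φ Z⟫ • φ Y - ⟪Y, φ Z⟫ • φ X + (2 * ⟪X, φ Y⟫) • φ Z) +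
      c₃ • ((⟪ξ, X⟫ * ⟪ξ, Z⟫) • Y - (⟪ξ, Y⟫ * ⟪ξ, Z⟫) • X +
        (⟪X, Z⟫ * ⟪ξ, Y⟫) • ξ - (⟪Y, Z⟫ * ⟪ξ, X⟫) • ξ))
    (n r : ℕ) (v : Fin n → V) (h : Fin r → V)
    (hv : Orthonormal ℝ v) (hh : Orthonormal ℝ h)
    (hperp : ∀ j i, ⟪v j, h i⟫ = 0)
    (hspan : ξ ∈ Submodule.span ℝ (Set.range v)) :
    ∑ i, ∑ j, ⟪R (v j) (h i) (h i), v j⟫ =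
      (n : ℝ) * (r : ℝ) * c₁ + 3 * c₂ * ∑ i, ∑ j, ⟪φ (v j), h i⟫ ^ 2
        - c₃ * (r : ℝ) := by
  -- η ∘ φ = 0
  have hηφ : ∀ X : V, ⟪ξ, φ X⟫ = 0 := by
    intro X
    have h1 : ⟪φ (φ X), φ (φ X)⟫ = ⟪φ X, φ X⟫ - ⟪ξ, φ X⟫ * ⟪ξ, φ X⟫ := hg _ _
    have h2 : ⟪φ X, φ X⟫ = ⟪X, X⟫ - ⟪ξ, X⟫ * ⟪ξ, X⟫ := hg _ _
    rw [hφ2] at h1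
    have h3 : ⟪-X + ⟪ξ, X⟫ • ξ, -X + ⟪ξ, X⟫ • ξ⟫
        = ⟪X, X⟫ - ⟪ξ, X⟫ * ⟪ξ, X⟫ := by
      simp only [inner_add_left, inner_add_right, inner_neg_neg, inner_neg_left,
        inner_neg_right, real_inner_smul_left, real_inner_smul_right, hξ,
        real_inner_comm X ξ]
      ring
    have h4 : ⟪ξ, φ X⟫ * ⟪ξ, φ X⟫ = 0 := by
      rw [h3, h2] at h1; linarith
    exact mul_self_eq_zero.mp h4
  -- skew symmetry
  have hskew : ∀ X Y : V, ⟪φ X, Y⟫ = -⟪X, φ Y⟫ := by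
    intro X Y
    have h1 : ⟪φ (φ X), φ Y⟫ = ⟪φ X, Y⟫ - ⟪ξ, φ X⟫ * ⟪ξ, Y⟫ := hg _ _
    rw [hφ2, hηφ] at h1
    have h2 : ⟪-X + ⟪ξ, X⟫ • ξ, φ Y⟫ = -⟪X, φ Y⟫ + ⟪ξ, X⟫ * ⟪ξ, φ Y⟫ := by
      simp [inner_add_left, inner_neg_left, real_inner_smul_left]
    rw [h2, hηφ] at h1
    linarith
  have hvv : ∀ j, ⟪v j, v j⟫ = (1 : ℝ) := fun j => by
    simpa using orthonormal_iff_ite.mp hv j j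
  have hhh : ∀ i, ⟪h i, h i⟫ = (1 : ℝ) := fun i => by
    simpa using orthonormal_iff_ite.mp hh i i
  -- ξ ⟂ h i
  have hξh : ∀ i, ⟪ξ, h i⟫ = 0 := by
    intro i
    clear hξ hφ2 hg hR hηφ hskew
    induction hspan using Submodule.span_induction with
    | mem x hx => obtain ⟨j, rfl⟩ := hx; exact hperp j i
    | zero => simp
    | add x y _ _ hx hy => simp [inner_add_left, hx, hy]
    | smul a x _ hx => simp [real_inner_smul_left, hx]
  -- Parseval: ∑ j, ⟪ξ, v j⟫ ^ 2 = 1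
  have hpar : ∑ j, ⟪ξ, v j⟫ ^ 2 = (1 : ℝ) := by
    obtain ⟨c, hc⟩ := (Submodule.mem_span_range_iff_exists_fun ℝ).mp hspan
    have hcj : ∀ j, ⟪ξ, v j⟫ = c j := by
      intro j
      rw [← hc, sum_inner]
      simp [real_inner_smul_left, orthonormal_iff_ite.mp hv,
        Finset.sum_ite_eq' Finset.univ j c]
    have : ⟪ξ, ξ⟫ = ∑ j, c j ^ 2 := by
      nth_rewrite 1 [← hc]
      rw [sum_inner]
      congr 1; ext j
      rw [real_inner_smul_left, real_inner_comm, hcj j, sq]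
    simp only [hcj]
    rw [← this, hξ]
  have key : ∀ i j, ⟪R (v j) (h i) (h i), v j⟫ =
      c₁ + 3 * c₂ * ⟪φ (v j), h i⟫ ^ 2 - c₃ * ⟪ξ, v j⟫ ^ 2 := by
    intro i j
    have hhphi : ⟪h i, φ (h i)⟫ = 0 := by
      have := hskew (h i) (h i)
      have h2 : ⟪φ (h i), h i⟫ = ⟪h i, φ (h i)⟫ := real_inner_comm _ _
      linarith
    have hvphi : ⟪v j, φ (h i)⟫ = -⟪φ (v j), h i⟫ := by
      have := hskew (v j) (h i); linarith
    rw [hR]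
    simp only [inner_add_left, inner_sub_left, real_inner_smul_left,
      inner_neg_left]
    have e1 : ⟪h i, v j⟫ = (0:ℝ) := by rw [real_inner_comm]; exact hperp j i
    have e2 : ⟪φ (h i), v j⟫ = -⟪φ (v j), h i⟫ := by
      rw [real_inner_comm]; exact hvphi
    rw [hperp j i, e1, e2, hvphi, hhphi, hξh i, hvv j, hhh i]
    ring
  simp only [key]
  have inner_sum : ∀ i : Fin r,
      ∑ j, (c₁ + 3 * c₂ * ⟪φ (v j), h i⟫ ^ 2 - c₃ * ⟪ξ, v j⟫ ^ 2)
        = (n : ℝ) * c₁ + 3 * c₂ * ∑ j, ⟪φ (v j), h i⟫ ^ 2 - c₃ := by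
    intro i
    rw [Finset.sum_sub_distrib, Finset.sum_add_distrib, Finset.sum_const,
      ← Finset.mul_sum, ← Finset.mul_sum, hpar]
    simp [Finset.card_univ, mul_comm]
  simp only [inner_sum]
  rw [Finset.sum_sub_distrib, Finset.sum_add_distrib, Finset.sum_const,
    Finset.sum_const, ← Finset.mul_sum]
  simp only [Finset.card_univ, Fintype.card_fin, nsmul_eq_mul]
  ring
end
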